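/- arXiv:1705.08077 — 3 statements merged into one kernel-verified Lean document; each statement's English description precedes it below -/
import Mathlib

section
/- Let f : ℝ³ × ℝ³ → ℝ be nonnegative with f ∈ L^∞, and let ρ(x) = ∫ f(x,v) dv. Then for every m ≥ 0 there is a constant C > 0 depending only on m such that ‖ρ‖_{L^{(m+3)/3}(ℝ³)} ≤ C ‖f‖_{L^∞}^{m/(m+3)} (∬ |v|^m f(x,v) dx dv)^{3/(m+3)}. -/
open MeasureTheory Real Set
noncomputable section

abbrev E3 := EuclideanSpace ℝ (Fin 3)

/-! For fixed `x`, split the velocity integral at a radius `R`. On `‖v‖ ≤ R` use `f ≤ ‖f‖_∞`,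
which costs `‖f‖_∞ |B₁| R³`; outside use `1 ≤ (‖v‖ / R) ^ m`, which costs `R⁻ᵐ σ(x)` with
`σ(x) = ∫ ‖v‖ ^ m f(x, v) dv`. Choosing `R ^ (m + 3) = σ(x) / ‖f‖_∞` balances the two terms and
gives `ρ(x) ≤ C ‖f‖_∞ ^ (m / (m + 3)) σ(x) ^ (3 / (m + 3))`. Raising this to the power
`(m + 3) / 3` and integrating in `x` turns `σ` into the total moment. -/

open scoped ENNReal
open Metric Module

theorem balance_of_rpow_add_eq {ℓ s R m d : ℝ} (hℓ : 0 < ℓ) (hR : 0 < R) (hmd : 0 < m + d)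
    (h : R ^ (m + d) = s / ℓ) :
    ℓ * R ^ d = ℓ ^ (m / (m + d)) * s ^ (d / (m + d)) ∧ R ^ (-m) * s = ℓ * R ^ d := by
  obtain rfl : s = ℓ * R ^ (m + d) := by rw [h]; field_simp
  constructor
  · rw [mul_rpow hℓ.le (by positivity), ← rpow_mul hR.le, ← mul_assoc, ← rpow_add hℓ]
    field_simp
    rw [rpow_one]
  · rw [rpow_add hR, rpow_neg hR.le]
    field_simp [(rpow_pos_of_pos hR m).ne']

section Moment

variable {E : Type*} [NormedAddCommGroup E] [MeasurableSpace E] {μ : Measure E} {g : E → ℝ≥0∞}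
  {m : ℝ}

theorem setLIntegral_compl_closedBall_le [OpensMeasurableSpace E] (hm : 0 ≤ m) {R : ℝ}
    (hR : 0 < R) :
    ∫⁻ v in (closedBall 0 R)ᶜ, g v ∂μ ≤ ENNReal.ofReal (R ^ (-m)) * ∫⁻ v, ‖v‖ₑ ^ m * g v ∂μ := by
  calc ∫⁻ v in (closedBall 0 R)ᶜ, g v ∂μ
      ≤ ∫⁻ v in (closedBall 0 R)ᶜ, ENNReal.ofReal (R ^ (-m)) * (‖v‖ₑ ^ m * g v) ∂μ := by
        refine setLIntegral_mono' isClosed_closedBall.measurableSet.compl fun v hv => ?_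
        have hRv : R < ‖v‖ := by simpa using hv
        have hweight : 1 ≤ ENNReal.ofReal (R ^ (-m)) * ‖v‖ₑ ^ m := by
          rw [← ofReal_norm, ENNReal.ofReal_rpow_of_nonneg (norm_nonneg _) hm,
            ← ENNReal.ofReal_mul (by positivity), rpow_neg hR.le, ← div_eq_inv_mul,
            ← div_rpow (norm_nonneg _) hR.le]
          exact ENNReal.one_le_ofReal.2 (one_le_rpow ((one_le_div hR).2 hRv.le) hm)
        calc g v = 1 * g v := (one_mul _).symm
          _ ≤ _ := by rw [← mul_assoc]; gcongr
    _ = ENNReal.ofReal (R ^ (-m)) * ∫⁻ v in (closedBall 0 R)ᶜ, ‖v‖ₑ ^ m * g v ∂μ :=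
        lintegral_const_mul' _ _ ENNReal.ofReal_ne_top
    _ ≤ _ := mul_le_mul_right (setLIntegral_le_lintegral _ _) _

theorem lintegral_le_ball_add_tail [OpensMeasurableSpace E] (hm : 0 ≤ m) {ℓ : ℝ≥0∞}
    (hgℓ : ∀ᵐ v ∂μ, g v ≤ ℓ) {R : ℝ} (hR : 0 < R) :
    ∫⁻ v, g v ∂μ ≤
      ℓ * μ (closedBall 0 R) + ENNReal.ofReal (R ^ (-m)) * ∫⁻ v, ‖v‖ₑ ^ m * g v ∂μ := by
  rw [← lintegral_add_compl _ isClosed_closedBall.measurableSet]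
  gcongr ?_ + ?_
  · calc ∫⁻ v in closedBall 0 R, g v ∂μ ≤ ∫⁻ _ in closedBall 0 R, ℓ ∂μ :=
          lintegral_mono_ae (ae_restrict_of_ae hgℓ)
      _ = ℓ * μ (closedBall 0 R) := setLIntegral_const _ _
  · exact setLIntegral_compl_closedBall_le hm hR

theorem lintegral_eq_zero_of_lintegral_moment_eq_zero [NullSingletonClass μ]
    [OpensMeasurableSpace E] (hg : AEMeasurable g μ)
    (h : ∫⁻ v, ‖v‖ₑ ^ m * g v ∂μ = 0) : ∫⁻ v, g v ∂μ = 0 := by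
  rw [lintegral_eq_zero_iff' hg]
  filter_upwards [(lintegral_eq_zero_iff' (by fun_prop)).1 h, Measure.ae_ne μ 0] with v hv hv0
  have hweight : ‖v‖ₑ ^ m ≠ 0 := by simp [ENNReal.rpow_eq_zero_iff, hv0]
  exact (mul_eq_zero.1 hv).resolve_left hweight

variable [NormedSpace ℝ E] [FiniteDimensional ℝ E] [BorelSpace E] [Nontrivial E] (μ)
  [μ.IsAddHaarMeasure]

theorem lintegral_le_mul_rpow_lintegral_moment (hm : 0 ≤ m) (hg : AEMeasurable g μ) {ℓ : ℝ≥0∞}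
    (hℓ : ℓ ≠ ∞) (hgℓ : ∀ᵐ v ∂μ, g v ≤ ℓ) :
    ∫⁻ v, g v ∂μ ≤ (μ (ball 0 1) + 1) * ℓ ^ (m / (m + finrank ℝ E)) *
      (∫⁻ v, ‖v‖ₑ ^ m * g v ∂μ) ^ ((finrank ℝ E : ℝ) / (m + finrank ℝ E)) := by
  set d : ℝ := (finrank ℝ E : ℝ)
  set σ := ∫⁻ v, ‖v‖ₑ ^ m * g v ∂μ
  have hd : 0 < d := Nat.cast_pos.2 finrank_pos
  have hmd : 0 < m + d := by linarith
  rcases eq_or_ne ℓ 0 with rfl | hℓ0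
  · have : ∫⁻ v, g v ∂μ = 0 := nonpos_iff_eq_zero.1 <| by simpa using lintegral_mono_ae hgℓ
    simp [this]
  rcases eq_or_ne σ 0 with hσ0 | hσ0
  · simp [lintegral_eq_zero_of_lintegral_moment_eq_zero hg hσ0]
  rcases eq_or_ne σ ∞ with hσtop | hσtop
  · rw [hσtop, ENNReal.top_rpow_of_pos (by positivity), ENNReal.mul_top (by simp [hℓ0, hℓ])]
    exact le_top
  set s := σ.toReal
  set R := (s / ℓ.toReal) ^ (m + d)⁻¹
  have hℓ' : 0 < ℓ.toReal := ENNReal.toReal_pos hℓ0 hℓ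
  have hs : 0 < s := ENNReal.toReal_pos hσ0 hσtop
  have hR : 0 < R := by positivity
  obtain ⟨hball, htail⟩ := balance_of_rpow_add_eq (d := d) hℓ' hR hmd
    (rpow_inv_rpow (by positivity) hmd.ne')
  calc ∫⁻ v, g v ∂μ
      ≤ ℓ * μ (closedBall 0 R) + ENNReal.ofReal (R ^ (-m)) * σ :=
        lintegral_le_ball_add_tail hm hgℓ hR
    _ = μ (ball 0 1) * ENNReal.ofReal (ℓ.toReal * R ^ d) + ENNReal.ofReal (R ^ (-m) * s) := by
        rw [Measure.addHaar_closedBall μ _ hR.le, ENNReal.ofReal_mul (by positivity),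
          ENNReal.ofReal_mul (by positivity), ENNReal.ofReal_toReal hℓ,
          ENNReal.ofReal_toReal hσtop, ← rpow_natCast]
        ring
    _ = (μ (ball 0 1) + 1) * ENNReal.ofReal (ℓ.toReal ^ (m / (m + d)) * s ^ (d / (m + d))) := by
        rw [htail, hball]
        ring
    _ = (μ (ball 0 1) + 1) * ℓ ^ (m / (m + d)) * σ ^ (d / (m + d)) := by
        rw [ENNReal.ofReal_mul (by positivity), ← ENNReal.ofReal_rpow_of_pos hℓ',
          ← ENNReal.ofReal_rpow_of_pos hs, ENNReal.ofReal_toReal hℓ,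
          ENNReal.ofReal_toReal hσtop, mul_assoc]

end Moment

theorem eLpNorm_le_mul_lintegral_rpow_inv {α F : Type*} [MeasurableSpace α] {μ : Measure α}
    [NormedAddCommGroup F] {ρ : α → F} {σ : α → ℝ≥0∞} {A : ℝ≥0∞} (hA : A ≠ ∞) {p : ℝ}
    (hp : 0 < p) (h : ∀ᵐ x ∂μ, ‖ρ x‖ₑ ≤ A * σ x ^ p⁻¹) :
    eLpNorm ρ (ENNReal.ofReal p) μ ≤ A * (∫⁻ x, σ x ∂μ) ^ p⁻¹ := by
  rw [eLpNorm_eq_lintegral_rpow_enorm_toReal (by simpa using hp) ENNReal.ofReal_ne_top,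
    ENNReal.toReal_ofReal hp.le, one_div]
  calc (∫⁻ x, ‖ρ x‖ₑ ^ p ∂μ) ^ p⁻¹
      ≤ (∫⁻ x, (A * σ x ^ p⁻¹) ^ p ∂μ) ^ p⁻¹ := by
        gcongr ?_ ^ _
        exact lintegral_mono_ae (h.mono fun x hx => by gcongr)
    _ = (A ^ p * ∫⁻ x, σ x ∂μ) ^ p⁻¹ := by
        simp_rw [ENNReal.mul_rpow_of_nonneg _ _ hp.le, ← ENNReal.rpow_mul,
          inv_mul_cancel₀ hp.ne', ENNReal.rpow_one]
        rw [lintegral_const_mul' _ _ (ENNReal.rpow_ne_top_of_nonneg hp.le hA)]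
    _ = A * (∫⁻ x, σ x ∂μ) ^ p⁻¹ := by
        rw [ENNReal.mul_rpow_of_nonneg _ _ (inv_nonneg.2 hp.le), ← ENNReal.rpow_mul,
          mul_inv_cancel₀ hp.ne', ENNReal.rpow_one]

/-- Velocity-moment interpolation estimate: for nonnegative `f ∈ L^∞` on phase space,
the spatial density `ρ(x) = ∫ f(x,v) dv` satisfies
`‖ρ‖_{L^{(m+3)/3}} ≤ C ‖f‖_∞^{m/(m+3)} (∬ |v|^m f)^{3/(m+3)}`. -/
theorem rho_interpolation (m : ℝ) (hm : 0 ≤ m) :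
    ∃ C : ℝ, 0 < C ∧
      ∀ (f : E3 × E3 → ℝ) (ρ : E3 → ℝ),
        Measurable f → (∀ z, 0 ≤ f z) → MemLp f ⊤ volume →
        (∀ x, ρ x = ∫ v : E3, f (x, v)) →
        Integrable (fun z : E3 × E3 => ‖z.2‖ ^ m * f z) →
        eLpNorm ρ (ENNReal.ofReal ((m + 3) / 3)) volume ≤
          ENNReal.ofReal C *
            (eLpNorm f ⊤ volume) ^ (m / (m + 3)) *
            (ENNReal.ofReal (∫ z : E3 × E3, ‖z.2‖ ^ m * f z)) ^ (3 / (m + 3)) := by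
  set κ := volume (ball (0 : E3) 1)
  refine ⟨κ.toReal + 1, by positivity, fun f ρ hf hf0 hfL hρ hint => ?_⟩
  set L := eLpNorm f ⊤ volume
  set σ : E3 → ℝ≥0∞ := fun x => ∫⁻ v, ‖v‖ₑ ^ m * ‖f (x, v)‖ₑ
  have hσ : ∫⁻ x, σ x = ENNReal.ofReal (∫ z : E3 × E3, ‖z.2‖ ^ m * f z) := by
    rw [ofReal_integral_eq_lintegral_ofReal hint
      (ae_of_all _ fun z => mul_nonneg (by positivity) (hf0 z)),
      Measure.volume_eq_prod, lintegral_prod _ (by fun_prop)]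
    refine lintegral_congr fun x => lintegral_congr fun v => ?_
    rw [ENNReal.ofReal_mul (by positivity), ← ENNReal.ofReal_rpow_of_nonneg (norm_nonneg _) hm,
      ofReal_norm, Real.enorm_of_nonneg (hf0 _)]
  have hbound : ∀ᵐ x : E3, ∀ᵐ v : E3, ‖f (x, v)‖ₑ ≤ L := by
    have h := enorm_ae_le_eLpNormEssSup f volume
    rw [Measure.volume_eq_prod, ← eLpNorm_exponent_top] at h
    exact Measure.ae_ae_of_ae_prod h
  have hρ_le : ∀ᵐ x, ‖ρ x‖ₑ ≤ ((κ + 1) * L ^ (m / (m + 3))) * σ x ^ ((m + 3) / 3)⁻¹ := by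
    filter_upwards [hbound] with x hx
    rw [hρ x, inv_div]
    refine (enorm_integral_le_lintegral_enorm _).trans ?_
    have h := lintegral_le_mul_rpow_lintegral_moment volume hm (by fun_prop) hfL.2.ne hx
    rwa [finrank_euclideanSpace_fin, Nat.cast_ofNat] at h
  calc eLpNorm ρ (ENNReal.ofReal ((m + 3) / 3)) volume
      ≤ ((κ + 1) * L ^ (m / (m + 3))) * (∫⁻ x, σ x) ^ ((m + 3) / 3)⁻¹ :=
        eLpNorm_le_mul_lintegral_rpow_inv (by finiteness) (by positivity) hρ_le
    _ = _ := by
        rw [hσ, inv_div, ENNReal.ofReal_add ENNReal.toReal_nonneg zero_le_one,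
          ENNReal.ofReal_toReal measure_ball_lt_top.ne, ENNReal.ofReal_one]
end
end

section
/- Let Ψ : Ω → [0,∞) be measurable on a measure space (Ω, μ) with μ(Ω) < ∞, and suppose Ψ ∈ L^p(Ω) for some p > 1 and Ψ belongs to the weak space M¹(Ω) = L^{1,∞}(Ω) with pseudo-norm |||Ψ|||_{M¹}. Then Ψ ∈ L¹(Ω) and ‖Ψ‖_{L¹(Ω)} ≤ C(p, μ(Ω)) |||Ψ|||_{M¹} [1 + log( ‖Ψ‖_{L^p(Ω)} / |||Ψ|||_{M¹} )], provided ‖Ψ‖_{L^p} ≥ |||Ψ|||_{M¹}. -/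
/-!
By the layer-cake formula `∫ Ψ = ∫₀^∞ μ {Ψ > t} dt`. Split the `t`-axis at `0 < a ≤ T` and bound
the distribution function by `μ(Ω)` on `(0, a]`, by `M / t` (weak `L¹`) on `(a, T]`, and by
Chebyshev's `N ^ p t ^ (-p)` on `(T, ∞)`, where `N = ‖Ψ‖_{L^p}`. With `a = M / (1 + μ(Ω))` and `T`
chosen so that `N ^ p T ^ (1 - p) = M`, the three layers contribute at most `M`, `M / (p - 1)` and
`M log (T / a) = M (p / (p - 1) · log (N / M) + log (1 + μ(Ω)))`.
-/

open MeasureTheory Real Set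
open scoped ENNReal
noncomputable section

section WeakL1

variable {α : Type*} [MeasurableSpace α] {μ : Measure α} {f : α → ℝ}

/-- The pseudo-norm `|||f|||_{M¹}` of the weak space `M¹ = L^{1,∞}`. -/
def weakL1Norm (μ : Measure α) (f : α → ℝ) : ℝ≥0∞ :=
  ⨆ (t : ℝ) (_ : 0 < t), ENNReal.ofReal t * μ {x | t < f x}

lemma meas_lt_le_weakL1Norm_div {t : ℝ} (ht : 0 < t) :
    μ {x | t < f x} ≤ weakL1Norm μ f / ENNReal.ofReal t := by
  rw [ENNReal.le_div_iff_mul_le (.inl (ENNReal.ofReal_pos.2 ht).ne') (.inl ENNReal.ofReal_ne_top),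
    mul_comm]
  exact le_iSup₂ (f := fun t (_ : 0 < t) ↦ ENNReal.ofReal t * μ {x | t < f x}) t ht

lemma lintegral_Ioc_zero_meas_lt_le (a : ℝ) :
    ∫⁻ t in Ioc 0 a, μ {x | t < f x} ≤ μ univ * ENNReal.ofReal a :=
  calc ∫⁻ t in Ioc 0 a, μ {x | t < f x}
      ≤ ∫⁻ _ in Ioc 0 a, μ univ := lintegral_mono fun _ ↦ measure_mono (subset_univ _)
    _ = μ univ * ENNReal.ofReal a := by rw [setLIntegral_const, Real.volume_Ioc, sub_zero]

lemma lintegral_Ioc_ofReal_inv {a b : ℝ} (ha : 0 < a) (hab : a ≤ b) :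
    ∫⁻ t in Ioc a b, ENNReal.ofReal t⁻¹ = ENNReal.ofReal (log (b / a)) := by
  have hpos : ∀ t ∈ Ioc a b, 0 < t := fun t ht ↦ ha.trans ht.1
  have hint : IntegrableOn (fun t : ℝ ↦ t⁻¹) (Ioc a b) :=
    (intervalIntegral.intervalIntegrable_inv
      (fun t ht ↦ (ha.trans_le (by simpa [hab] using ht.1)).ne') continuousOn_id).1
  rw [← ofReal_integral_eq_lintegral_ofReal hint
      ((ae_restrict_mem measurableSet_Ioc).mono fun t ht ↦ (inv_pos.2 (hpos t ht)).le),
    ← intervalIntegral.integral_of_le hab, integral_inv_of_pos ha (ha.trans_le hab)]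

lemma lintegral_Ioc_meas_lt_le_weakL1Norm {a b : ℝ} (ha : 0 < a) (hab : a ≤ b) :
    ∫⁻ t in Ioc a b, μ {x | t < f x} ≤ weakL1Norm μ f * ENNReal.ofReal (log (b / a)) :=
  calc ∫⁻ t in Ioc a b, μ {x | t < f x}
      ≤ ∫⁻ t in Ioc a b, weakL1Norm μ f * ENNReal.ofReal t⁻¹ := by
        refine setLIntegral_mono' measurableSet_Ioc fun t ht ↦ ?_
        have ht0 : 0 < t := ha.trans_le ht.1.le
        rw [ENNReal.ofReal_inv_of_pos ht0, ← div_eq_mul_inv]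
        exact meas_lt_le_weakL1Norm_div ht0
    _ = weakL1Norm μ f * ENNReal.ofReal (log (b / a)) := by
        rw [lintegral_const_mul _ (by fun_prop), lintegral_Ioc_ofReal_inv ha hab]

lemma lintegral_Ioi_ofReal_rpow_neg {p T : ℝ} (hp : 1 < p) (hT : 0 < T) :
    ∫⁻ t in Ioi T, ENNReal.ofReal (t ^ (-p)) = ENNReal.ofReal (T ^ (1 - p) / (p - 1)) := by
  rw [← ofReal_integral_eq_lintegral_ofReal (integrableOn_Ioi_rpow_of_lt (by linarith) hT)
      ((ae_restrict_mem measurableSet_Ioi).mono fun t ht ↦ rpow_nonneg (hT.trans ht).le _),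
    integral_Ioi_rpow_of_lt (by linarith) hT]
  congr 1
  rw [show -p + 1 = -(p - 1) by ring, div_neg, neg_div, neg_neg, neg_sub]

lemma meas_lt_le_eLpNorm_rpow_mul {p t : ℝ} (hp : 0 < p) (ht : 0 < t)
    (hf : AEStronglyMeasurable f μ) :
    μ {x | t < f x} ≤ eLpNorm f (ENNReal.ofReal p) μ ^ p * ENNReal.ofReal (t ^ (-p)) := by
  have hsub : {x | t < f x} ⊆ {x | ENNReal.ofReal t ≤ ‖f x‖ₑ} := fun x hx ↦ by
    rw [mem_ofPred_eq, ← ofReal_norm]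
    exact ENNReal.ofReal_le_ofReal (hx.le.trans (le_abs_self _))
  refine (measure_mono hsub).trans ((meas_ge_le_mul_pow_eLpNorm_enorm μ
    (ENNReal.ofReal_pos.2 hp).ne' ENNReal.ofReal_ne_top hf (ENNReal.ofReal_pos.2 ht).ne'
    (absurd · ENNReal.ofReal_ne_top)).trans_eq ?_)
  rw [ENNReal.toReal_ofReal hp.le, mul_comm, ← ENNReal.ofReal_inv_of_pos ht,
    ENNReal.ofReal_rpow_of_pos (inv_pos.2 ht), inv_rpow ht.le, rpow_neg ht.le]

lemma lintegral_Ioi_meas_lt_le_eLpNorm {p T : ℝ} (hp : 1 < p) (hT : 0 < T)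
    (hf : AEStronglyMeasurable f μ) :
    ∫⁻ t in Ioi T, μ {x | t < f x} ≤
      eLpNorm f (ENNReal.ofReal p) μ ^ p * ENNReal.ofReal (T ^ (1 - p) / (p - 1)) :=
  calc ∫⁻ t in Ioi T, μ {x | t < f x}
      ≤ ∫⁻ t in Ioi T, eLpNorm f (ENNReal.ofReal p) μ ^ p * ENNReal.ofReal (t ^ (-p)) :=
        setLIntegral_mono' measurableSet_Ioi fun t ht ↦
          meas_lt_le_eLpNorm_rpow_mul (by linarith) (hT.trans ht) hf
    _ = _ := by rw [lintegral_const_mul _ (by fun_prop), lintegral_Ioi_ofReal_rpow_neg hp hT]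

lemma lintegral_ofReal_le_weakL1Norm_eLpNorm (hf_nn : 0 ≤ᵐ[μ] f)
    (hf : AEStronglyMeasurable f μ) {p a T : ℝ} (hp : 1 < p) (ha : 0 < a) (haT : a ≤ T) :
    ∫⁻ x, ENNReal.ofReal (f x) ∂μ ≤ μ univ * ENNReal.ofReal a
      + weakL1Norm μ f * ENNReal.ofReal (log (T / a))
      + eLpNorm f (ENNReal.ofReal p) μ ^ p * ENNReal.ofReal (T ^ (1 - p) / (p - 1)) := by
  rw [lintegral_eq_lintegral_meas_lt μ hf_nn hf.aemeasurable,
    ← Ioc_union_Ioi_eq_Ioi (ha.le.trans haT),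
    lintegral_union measurableSet_Ioi (Ioc_disjoint_Ioi le_rfl),
    ← Ioc_union_Ioc_eq_Ioc ha.le haT,
    lintegral_union measurableSet_Ioc (Ioc_disjoint_Ioc_of_le le_rfl)]
  gcongr
  · exact lintegral_Ioc_zero_meas_lt_le a
  · exact lintegral_Ioc_meas_lt_le_weakL1Norm ha haT
  · exact lintegral_Ioi_meas_lt_le_eLpNorm hp (ha.trans_le haT) hf

lemma integral_le_of_weakL1Norm_le_of_eLpNorm_le [IsFiniteMeasure μ] (hf_nn : 0 ≤ᵐ[μ] f)
    (hf : AEStronglyMeasurable f μ) {p a T M N : ℝ} (hp : 1 < p) (ha : 0 < a) (haT : a ≤ T)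
    (hM : 0 ≤ M) (hW : weakL1Norm μ f ≤ ENNReal.ofReal M)
    (hN : 0 ≤ N) (hE : eLpNorm f (ENNReal.ofReal p) μ ≤ ENNReal.ofReal N) :
    ∫ x, f x ∂μ ≤
      (μ univ).toReal * a + M * log (T / a) + N ^ p * (T ^ (1 - p) / (p - 1)) := by
  have hT : 0 < T := ha.trans_le haT
  have hlog : 0 ≤ log (T / a) := log_nonneg ((one_le_div ha).2 haT)
  have hp1 : 0 < p - 1 := by linarith
  have hbound : ∫⁻ x, ENNReal.ofReal (f x) ∂μ ≤
      ENNReal.ofReal ((μ univ).toReal * a + M * log (T / a) + N ^ p * (T ^ (1 - p) / (p - 1))) := by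
    refine (lintegral_ofReal_le_weakL1Norm_eLpNorm hf_nn hf hp ha haT).trans ?_
    rw [ENNReal.ofReal_add (by positivity) (by positivity),
      ENNReal.ofReal_add (by positivity) (by positivity),
      ENNReal.ofReal_mul ENNReal.toReal_nonneg, ENNReal.ofReal_toReal (measure_ne_top μ univ),
      ENNReal.ofReal_mul hM, ENNReal.ofReal_mul (by positivity),
      ← ENNReal.ofReal_rpow_of_nonneg hN (by linarith)]
    gcongr
  rw [integral_eq_lintegral_of_nonneg_ae hf_nn hf]
  exact ENNReal.toReal_le_of_le_ofReal (by positivity) hbound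

end WeakL1

lemma interpolation_threshold_bound {p V M N a T : ℝ} (hp : 1 < p) (hV : 0 ≤ V) (hM : 0 < M)
    (hMN : M ≤ N) (ha : a = M / (1 + V)) (hT : T = N * (N / M) ^ (1 / (p - 1))) :
    0 < a ∧ a ≤ T ∧ V * a + M * log (T / a) + N ^ p * (T ^ (1 - p) / (p - 1)) ≤
      (p / (p - 1) + log (1 + V)) * M * (1 + log (N / M)) := by
  have hp1 : 0 < p - 1 := by linarith
  have hN : 0 < N := hM.trans_le hMN
  have hNM : 1 ≤ N / M := (one_le_div hM).2 hMN
  have hNM0 : 0 < N / M := by positivity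
  have ha0 : 0 < a := ha ▸ by positivity
  have hNT : N ≤ T := hT ▸ le_mul_of_one_le_right hN.le (one_le_rpow hNM (by positivity))
  have hT0 : 0 < T := hN.trans_le hNT
  have hVa : V * a ≤ M := by
    rw [ha, mul_div_assoc', div_le_iff₀ (by positivity)]
    nlinarith
  have htail : N ^ p * T ^ (1 - p) = M := by
    rw [hT, mul_rpow hN.le (rpow_nonneg hNM0.le _), ← rpow_mul hNM0.le,
      show 1 / (p - 1) * (1 - p) = -1 by field_simp; ring, rpow_neg_one, ← mul_assoc,
      ← rpow_add hN, add_sub_cancel, rpow_one]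
    field_simp
  have hlog : log (T / a) = p / (p - 1) * log (N / M) + log (1 + V) := by
    rw [log_div hT0.ne' ha0.ne', hT, ha, log_mul hN.ne' (rpow_pos_of_pos hNM0 _).ne',
      log_rpow hNM0, log_div hM.ne' (by positivity), log_div hN.ne' hM.ne']
    field_simp
    ring
  have hpp : M / (p - 1) = M * (p / (p - 1)) - M := by field_simp; ring
  have hL : 0 ≤ log (N / M) := log_nonneg hNM
  have hlg : 0 ≤ log (1 + V) := log_nonneg (by linarith)
  have haM : a ≤ M := ha ▸ div_le_self hM.le (by linarith)
  refine ⟨ha0, haM.trans (hMN.trans hNT), ?_⟩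
  rw [← mul_div_assoc, htail, hlog, hpp]
  nlinarith [mul_nonneg (mul_nonneg hM.le hlg) hL]

/-- Interpolation lemma between `L^p` and weak-`L¹`: on a finite measure space,
if `Ψ ≥ 0` lies in `L^p` (`p > 1`) and in `M¹ = L^{1,∞}` with pseudo-norm at most `M > 0`,
and `‖Ψ‖_{L^p} ≥ M`, then `Ψ ∈ L¹` and
`‖Ψ‖_{L¹} ≤ C(p, μ(Ω)) · M · [1 + log(‖Ψ‖_{L^p}/M)]`. -/
theorem interpolation_Lp_weakL1 {Ω : Type*} [MeasurableSpace Ω] (μ : Measure Ω)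
    [IsFiniteMeasure μ] (p : ℝ) (hp : 1 < p) :
    ∃ C : ℝ, 0 < C ∧
      ∀ (Ψ : Ω → ℝ) (M : ℝ), 0 < M →
        Measurable Ψ → (∀ ω, 0 ≤ Ψ ω) →
        MemLp Ψ (ENNReal.ofReal p) μ →
        (∀ lam : ℝ, 0 < lam → ENNReal.ofReal lam * μ {ω | lam < Ψ ω} ≤ ENNReal.ofReal M) →
        M ≤ (eLpNorm Ψ (ENNReal.ofReal p) μ).toReal →
        Integrable Ψ μ ∧
          (∫ ω, Ψ ω ∂μ) ≤
            C * M * (1 + Real.log ((eLpNorm Ψ (ENNReal.ofReal p) μ).toReal / M)) := by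
  have hV : 0 ≤ (μ univ).toReal := ENNReal.toReal_nonneg
  refine ⟨p / (p - 1) + log (1 + (μ univ).toReal),
    add_pos_of_pos_of_nonneg (div_pos (by linarith) (by linarith)) (log_nonneg (by linarith)), ?_⟩
  intro Ψ M hM hmeas hnn hmem hweak hMN
  have hE : eLpNorm Ψ (ENNReal.ofReal p) μ =
      ENNReal.ofReal (eLpNorm Ψ (ENNReal.ofReal p) μ).toReal :=
    (ENNReal.ofReal_toReal hmem.eLpNorm_ne_top).symm
  obtain ⟨ha, haT, hbound⟩ := interpolation_threshold_bound hp hV hM hMN rfl rfl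
  refine ⟨hmem.integrable (ENNReal.one_le_ofReal.2 hp.le), ?_⟩
  exact (integral_le_of_weakL1Norm_le_of_eLpNorm_le (ae_of_all _ hnn) hmeas.aestronglyMeasurable
    hp ha haT hM.le (iSup₂_le hweak) ENNReal.toReal_nonneg hE.le).trans hbound
end
end

section
/- Let A : ℝ^{2N} → ℝ^{2N} be the diagonal matrix A(x,v) = (δ₁x, δ₂v) with 0 < δ₁ ≤ δ₂, and let b(x,v) = (b₁(v), b₂(x)) with b₁ Lipschitz. Then for any two points Z = (X,V), Z̄ = (X̄,V̄) in ℝ^{2N}: |A^{-1}[b(Z) − b(Z̄)]| / |A^{-1}[Z − Z̄]| ≤ (δ₂/δ₁) Lip(b₁) + (δ₁/δ₂) |b₂(X) − b₂(X̄)| / |X − X̄| (whenever X ≠ X̄ and Z ≠ Z̄). -/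
open MeasureTheory Real Set
noncomputable section

/-! Both product norms are sup norms, so it suffices to bound each rescaled component of
`b(Z) - b(Z̄)` by the *other* rescaled component of `Z - Z̄`: the `x`-part `b₁(V) - b₁(V̄)` is
controlled by `V - V̄` through `Lip(b₁)`, paying `δ₂/δ₁` for the change of scale, and the
`v`-part `b₂(X) - b₂(X̄)` by `X - X̄` through its own difference quotient, gaining `δ₁/δ₂`. -/

theorem norm_smul_le_div_mul_norm_smul {E F : Type*} [SeminormedAddCommGroup E]
    [NormedSpace ℝ E] [SeminormedAddCommGroup F] [NormedSpace ℝ F] {u : E} {w : F}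
    {c d L : ℝ} (hc : 0 ≤ c) (hd : 0 < d) (h : ‖u‖ ≤ L * ‖w‖) :
    ‖c • u‖ ≤ c / d * L * ‖d • w‖ := by
  rw [norm_smul, norm_smul, Real.norm_of_nonneg hc, Real.norm_of_nonneg hd.le]
  calc c * ‖u‖ ≤ c * (L * ‖w‖) := mul_le_mul_of_nonneg_left h hc
    _ = c / d * L * (d * ‖w‖) := by field_simp

theorem Prod.norm_le_add_mul_norm_of_cross_le {E F G H : Type*} [SeminormedAddCommGroup E]
    [SeminormedAddCommGroup F] [SeminormedAddCommGroup G] [SeminormedAddCommGroup H]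
    {u₁ : E} {u₂ : F} {w₁ : G} {w₂ : H} {α β : ℝ} (hα : 0 ≤ α) (hβ : 0 ≤ β)
    (h₁ : ‖u₁‖ ≤ α * ‖w₂‖) (h₂ : ‖u₂‖ ≤ β * ‖w₁‖) :
    ‖(u₁, u₂)‖ ≤ (α + β) * ‖(w₁, w₂)‖ := by
  have hw₁ : ‖w₁‖ ≤ ‖(w₁, w₂)‖ := norm_fst_le (w₁, w₂)
  have hw₂ : ‖w₂‖ ≤ ‖(w₁, w₂)‖ := norm_snd_le (w₁, w₂)
  refine norm_prod_le_iff.2 ⟨?_, ?_⟩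
  · nlinarith [norm_nonneg (w₁, w₂)]
  · nlinarith [norm_nonneg (w₁, w₂)]

theorem anisotropic_difference_quotient_general (N : ℕ)
    (δ₁ δ₂ : ℝ) (h₁ : 0 < δ₁) (h₁₂ : δ₁ ≤ δ₂)
    (b₁ b₂ : EuclideanSpace ℝ (Fin N) → EuclideanSpace ℝ (Fin N))
    (K : NNReal) (hb₁ : LipschitzWith K b₁)
    (X V X' V' : EuclideanSpace ℝ (Fin N))
    (hX : X ≠ X') :
    ‖(δ₁⁻¹ • (b₁ V - b₁ V'), δ₂⁻¹ • (b₂ X - b₂ X'))‖ /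
        ‖(δ₁⁻¹ • (X - X'), δ₂⁻¹ • (V - V'))‖ ≤
      (δ₂ / δ₁) * K + (δ₁ / δ₂) * (‖b₂ X - b₂ X'‖ / ‖X - X'‖) := by
  have h₂ : 0 < δ₂ := h₁.trans_le h₁₂
  have h_transport : ‖δ₁⁻¹ • (b₁ V - b₁ V')‖ ≤ δ₂ / δ₁ * K * ‖δ₂⁻¹ • (V - V')‖ := by
    simpa only [inv_div_inv] using norm_smul_le_div_mul_norm_smul (inv_nonneg.2 h₁.le)
      (inv_pos.2 h₂) (hb₁.norm_sub_le V V')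
  have h_force : ‖δ₂⁻¹ • (b₂ X - b₂ X')‖ ≤
      δ₁ / δ₂ * (‖b₂ X - b₂ X'‖ / ‖X - X'‖) * ‖δ₁⁻¹ • (X - X')‖ := by
    have hq : ‖b₂ X - b₂ X'‖ = ‖b₂ X - b₂ X'‖ / ‖X - X'‖ * ‖X - X'‖ :=
      (div_mul_cancel₀ _ (norm_sub_pos_iff.2 hX).ne').symm
    simpa only [inv_div_inv] using norm_smul_le_div_mul_norm_smul (inv_nonneg.2 h₂.le)
      (inv_pos.2 h₁) hq.le
  refine div_le_of_le_mul₀ (norm_nonneg _) (by positivity) ?_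
  exact Prod.norm_le_add_mul_norm_of_cross_le (by positivity) (by positivity) h_transport h_force

/-- Anisotropic splitting of the difference quotient for a kinetic vector field
`b(x,v) = (b₁(v), b₂(x))` with `b₁` Lipschitz, under the scaling
`A⁻¹(x,v) = (x/δ₁, v/δ₂)` with `0 < δ₁ ≤ δ₂`:
`|A⁻¹[b(Z)-b(Z̄)]| / |A⁻¹[Z-Z̄]| ≤ (δ₂/δ₁)·Lip(b₁) + (δ₁/δ₂)·|b₂(X)-b₂(X̄)|/|X-X̄|`. -/
theorem anisotropic_difference_quotient (N : ℕ)
    (δ₁ δ₂ : ℝ) (h₁ : 0 < δ₁) (h₁₂ : δ₁ ≤ δ₂)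
    (b₁ b₂ : EuclideanSpace ℝ (Fin N) → EuclideanSpace ℝ (Fin N))
    (K : NNReal) (hb₁ : LipschitzWith K b₁)
    (X V X' V' : EuclideanSpace ℝ (Fin N))
    (hX : X ≠ X') (hZ : (X, V) ≠ (X', V')) :
    ‖(δ₁⁻¹ • (b₁ V - b₁ V'), δ₂⁻¹ • (b₂ X - b₂ X'))‖ /
        ‖(δ₁⁻¹ • (X - X'), δ₂⁻¹ • (V - V'))‖ ≤
      (δ₂ / δ₁) * K + (δ₁ / δ₂) * (‖b₂ X - b₂ X'‖ / ‖X - X'‖) :=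
  anisotropic_difference_quotient_general N δ₁ δ₂ h₁ h₁₂ b₁ b₂ K hb₁ X V X' V' hX
end
end
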